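/- Fix κ ≥ 0 and let A ∈ C²(ℝ, M²) be the solution of the initial value problem Ä + κA = Λ(A,Ȧ)·cof A with data (A₀,B₀) ∈ D, and set X₃ = X₃(A₀,B₀). Then A(t) ∈ SO(2,ℝ) for all t ∈ ℝ if and only if A₀ ∈ SO(2,ℝ) and X₁(A₀,B₀) = κ + ¼X₃². In that case A(t) = U(½X₃t)·A₀ for all t ∈ ℝ. -/

import Mathlib

/-!
If `A` stays in `SO(2)`, its velocity is `ω Z A` at every time, and for such data `X₃ = 2ω` and
`X₁ = κ + ω²`; this gives the identity at `t = 0`. Conversely, for `A₀ ∈ SO(2)` we have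
`X₃ = ⟨Z A₀, B₀⟩` and `|Z A₀|² = 2`, so `X₁ = κ + ¼ X₃²` is the equality case of Cauchy–Schwarz
and forces `B₀ = ½ X₃ Z A₀`. The rigid rotation `U(½ X₃ t) A₀` solves the equation with these data
(along it `cof A = A` and `Λ = κ - ¼ X₃²`), and the first-order vector field is `C¹` wherever
`|A| ≠ 0`, so uniqueness of solutions identifies it with `A`.
-/

open Matrix

noncomputable section

/-- `M²`: the space of 2×2 real matrices. -/
abbrev M2 : Type := Matrix (Fin 2) (Fin 2) ℝ

/-- Frobenius inner product `⟨A,B⟩ = tr(AᵀB)`. -/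
def mip (A B : M2) : ℝ := (Aᵀ * B).trace

/-- Frobenius norm `|A| = ⟨A,A⟩^{1/2}`. -/
def fnorm (A : M2) : ℝ := Real.sqrt (mip A A)

/-- The matrix Z = [[0,−1],[1,0]]. -/
def Zm : M2 := !![0, -1; 1, 0]

/-- The matrix K = [[1,0],[0,−1]]. -/
def Km : M2 := !![1, 0; 0, -1]

/-- The matrix M = [[0,1],[1,0]]. -/
def Mm : M2 := !![0, 1; 1, 0]

/-- Cofactor: cof [[a,b],[c,d]] = [[d,−c],[−b,a]]. -/
def cofm (A : M2) : M2 := !![A 1 1, -(A 1 0); -(A 0 1), A 0 0]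

/-- Membership in SO(2,ℝ). -/
def isSO (U : M2) : Prop := U.det = 1 ∧ U⁻¹ = Uᵀ

/-- The rotation U(θ) = cos θ·I + sin θ·Z. -/
def Um (θ : ℝ) : M2 := Real.cos θ • (1 : M2) + Real.sin θ • Zm

/-- Invariant X₁(A,B) = ½|B|² + (κ/2)|A|². -/
def X1 (κ : ℝ) (A B : M2) : ℝ := (1/2) * mip B B + (κ/2) * mip A A

/-- Invariant X₂(A,B) = ½⟨ZA − AZ, B⟩. -/
def X2 (A B : M2) : ℝ := (1/2) * mip (Zm * A - A * Zm) B

/-- Invariant X₃(A,B) = ½⟨ZA + AZ, B⟩. -/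
def X3 (A B : M2) : ℝ := (1/2) * mip (Zm * A + A * Zm) B

/-- Lagrange multiplier Λ(A,B) = 2(κ − det B)/|A|². -/
def Lam (κ : ℝ) (A B : M2) : ℝ := 2 * (κ - B.det) / (mip A A)

attribute [local instance] Matrix.normedAddCommGroup Matrix.normedSpace

open Filter Topology

theorem ODE_solution_eq_of_contDiffAt {E : Type*} [NormedAddCommGroup E] [NormedSpace ℝ E]
    {v : E → E} {f g : ℝ → E} {t₀ : ℝ}
    (hv : ∀ t, ContDiffAt ℝ 1 v (g t)) (hf : ∀ t, HasDerivAt f (v (f t)) t)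
    (hg : ∀ t, HasDerivAt g (v (g t)) t) (heq : f t₀ = g t₀) : f = g := by
  have hfc : Continuous f := continuous_iff_continuousAt.2 fun t => (hf t).continuousAt
  have hgc : Continuous g := continuous_iff_continuousAt.2 fun t => (hg t).continuousAt
  have hopen : IsOpen {t | f t = g t} := by
    refine isOpen_iff_mem_nhds.2 fun t (ht : f t = g t) => ?_
    obtain ⟨K, s, hs, hlip⟩ := (hv t).exists_lipschitzOnWith
    have hfs : s ∈ 𝓝 (f t) := ht ▸ hs
    exact ODE_solution_unique_of_eventually (v := fun _ => v) (s := fun _ => s)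
      (.of_forall fun _ => hlip)
      (((hfc.tendsto t).eventually_mem hfs).mono fun u hu => ⟨hf u, hu⟩)
      (((hgc.tendsto t).eventually_mem hs).mono fun u hu => ⟨hg u, hu⟩) ht
  have huniv := IsClopen.eq_univ ⟨isClosed_eq hfc hgc, hopen⟩ ⟨t₀, heq⟩
  exact funext fun t => Set.eq_univ_iff_forall.1 huniv t

section MatrixCalculus

variable {n : Type*} [Fintype n] [DecidableEq n] {F : ℝ → Matrix n n ℝ} {D : Matrix n n ℝ}
  {t : ℝ}

theorem HasDerivAt.const_matrix_mul (L : Matrix n n ℝ) (h : HasDerivAt F D t) :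
    HasDerivAt (fun s => L * F s) (L * D) t :=
  (LinearMap.mulLeft ℝ L).toContinuousLinearMap.hasFDerivAt.comp_hasDerivAt t h

theorem HasDerivAt.matrix_mul_const (R : Matrix n n ℝ) (h : HasDerivAt F D t) :
    HasDerivAt (fun s => F s * R) (D * R) t :=
  (LinearMap.mulRight ℝ R).toContinuousLinearMap.hasFDerivAt.comp_hasDerivAt t h

end MatrixCalculus

lemma mip_eq (A B : M2) :
    mip A B = A 0 0 * B 0 0 + A 0 1 * B 0 1 + A 1 0 * B 1 0 + A 1 1 * B 1 1 := by
  simp only [mip, trace_fin_two, mul_apply, transpose_apply, Fin.sum_univ_two]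
  ring

lemma mip_smul_left (c : ℝ) (A B : M2) : mip (c • A) B = c * mip A B := by
  simp [mip, trace_smul]

lemma mip_smul_right (c : ℝ) (A B : M2) : mip A (c • B) = c * mip A B := by
  simp [mip, trace_smul]

lemma mip_sub_smul_self (B u : M2) (c : ℝ) :
    mip (B - c • u) (B - c • u) = mip B B - 2 * c * mip u B + c ^ 2 * mip u u := by
  simp only [mip_eq, Matrix.sub_apply, Matrix.smul_apply, smul_eq_mul]
  ring

lemma mip_self_eq_zero_iff {A : M2} : mip A A = 0 ↔ A = 0 := by
  simpa [mip, conjTranspose_eq_transpose_of_trivial] using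
    trace_conjTranspose_mul_self_eq_zero_iff (A := A)

lemma mip_Zm_mul_self (A : M2) : mip (Zm * A) (Zm * A) = mip A A := by
  simp only [mip_eq, Zm, mul_apply, Fin.sum_univ_two, of_apply, cons_val', cons_val_zero,
    cons_val_one, cons_val_fin_one]
  ring

lemma Zm_mul_Zm : Zm * Zm = -1 := by
  ext i j
  fin_cases i <;> fin_cases j <;> simp [Zm]

lemma det_Zm : Zm.det = 1 := by
  simp [Zm, det_fin_two]

lemma hasDerivAt_Um (θ : ℝ) : HasDerivAt Um (Zm * Um θ) θ := by
  have hZ : Zm * Um θ = -Real.sin θ • (1 : M2) + Real.cos θ • Zm := by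
    simp only [Um, mul_add, mul_smul_comm, mul_one, Zm_mul_Zm]
    module
  rw [hZ]
  exact ((Real.hasDerivAt_cos θ).smul_const (1 : M2)).add ((Real.hasDerivAt_sin θ).smul_const Zm)

lemma hasDerivAt_Um_mul (ω : ℝ) (U : M2) (t : ℝ) :
    HasDerivAt (fun s => Um (ω * s) * U) (ω • (Zm * (Um (ω * t) * U))) t := by
  have h := (hasDerivAt_Um (ω * t)).scomp t ((hasDerivAt_id t).const_mul ω)
  simpa [smul_mul_assoc, Matrix.mul_assoc] using h.matrix_mul_const U

section SO

variable {U : M2}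

lemma adjugate_eq_transpose_iff : U.adjugate = Uᵀ ↔ U 1 1 = U 0 0 ∧ U 0 1 = -U 1 0 := by
  rw [adjugate_fin_two, ← Matrix.ext_iff]
  simp only [of_apply, cons_val', cons_val_fin_one, transpose_apply, Fin.forall_fin_two,
    cons_val_zero, cons_val_one]
  constructor
  · rintro ⟨⟨h1, h2⟩, -, -⟩
    exact ⟨h1, by linarith⟩
  · rintro ⟨h1, h2⟩
    exact ⟨⟨h1, by linarith⟩, by linarith, h1.symm⟩

lemma isSO_iff : isSO U ↔ U 1 1 = U 0 0 ∧ U 0 1 = -U 1 0 ∧ U 0 0 ^ 2 + U 1 0 ^ 2 = 1 := by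
  have hinv (hdet : U.det = 1) : U⁻¹ = U.adjugate := by
    rw [inv_def, hdet, Ring.inverse_one, one_smul]
  constructor
  · rintro ⟨hdet, hU⟩
    obtain ⟨h11, h01⟩ := adjugate_eq_transpose_iff.1 (hinv hdet ▸ hU)
    rw [det_fin_two, h11, h01] at hdet
    exact ⟨h11, h01, by linear_combination hdet⟩
  · rintro ⟨h11, h01, hcs⟩
    have hdet : U.det = 1 := by
      rw [det_fin_two, h11, h01]
      linear_combination hcs
    exact ⟨hdet, hinv hdet ▸ adjugate_eq_transpose_iff.2 ⟨h11, h01⟩⟩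

lemma isSO_mul {V : M2} (hU : isSO U) (hV : isSO V) : isSO (U * V) :=
  ⟨by rw [det_mul, hU.1, hV.1, one_mul], by rw [Matrix.mul_inv_rev, hU.2, hV.2, transpose_mul]⟩

lemma isSO_Um (θ : ℝ) : isSO (Um θ) :=
  isSO_iff.2 ⟨by simp [Um, Zm], by simp [Um, Zm], by simp [Um, Zm]⟩

lemma Zm_mul_comm_of_isSO (hU : isSO U) : Zm * U = U * Zm := by
  obtain ⟨h11, h01, -⟩ := isSO_iff.1 hU
  ext i j
  fin_cases i <;> fin_cases j <;> simp [Zm, mul_apply, h11, h01]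

lemma cofm_of_isSO (hU : isSO U) : cofm U = U := by
  obtain ⟨h11, h01, -⟩ := isSO_iff.1 hU
  ext i j
  fin_cases i <;> fin_cases j <;> simp [cofm, h11, h01]

lemma mip_self_of_isSO (hU : isSO U) : mip U U = 2 := by
  obtain ⟨h11, h01, hcs⟩ := isSO_iff.1 hU
  rw [mip_eq, h11, h01]
  linear_combination 2 * hcs

lemma X3_of_isSO (hU : isSO U) (B : M2) : X3 U B = mip (Zm * U) B := by
  rw [X3, ← Zm_mul_comm_of_isSO hU, ← two_smul ℝ, mip_smul_left]
  ring

lemma X3_smul_Zm_mul (hU : isSO U) (ω : ℝ) : X3 U (ω • (Zm * U)) = 2 * ω := by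
  rw [X3_of_isSO hU, mip_smul_right, mip_Zm_mul_self, mip_self_of_isSO hU]
  ring

lemma X1_smul_Zm_mul (κ : ℝ) (hU : isSO U) (ω : ℝ) :
    X1 κ U (ω • (Zm * U)) = κ + ω ^ 2 := by
  rw [X1, mip_smul_left, mip_smul_right, mip_Zm_mul_self, mip_self_of_isSO hU]
  ring

lemma eq_smul_Zm_mul_of_X1_eq {κ : ℝ} {B : M2} (hU : isSO U)
    (h : X1 κ U B = κ + 1 / 4 * X3 U B ^ 2) : B = (X3 U B / 2) • (Zm * U) := by
  have hu : mip (Zm * U) (Zm * U) = 2 := by rw [mip_Zm_mul_self, mip_self_of_isSO hU]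
  rw [X1, mip_self_of_isSO hU] at h
  rw [← sub_eq_zero, ← mip_self_eq_zero_iff, mip_sub_smul_self, hu, ← X3_of_isSO hU]
  linear_combination 2 * h

end SO

lemma eq_smul_Zm_mul_of_hasDerivAt {F : ℝ → M2} {B : M2} {t : ℝ} (hF : HasDerivAt F B t)
    (hSO : ∀ s, isSO (F s)) : B = (F t 0 0 * B 1 0 - F t 1 0 * B 0 0) • (Zm * F t) := by
  have hentry (i j : Fin 2) : HasDerivAt (fun s => F s i j) (B i j) t :=
    hasDerivAt_pi.1 (hasDerivAt_pi.1 hF i) j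
  have h11 (s : ℝ) := (isSO_iff.1 (hSO s)).1
  have h01 (s : ℝ) := (isSO_iff.1 (hSO s)).2.1
  have hcs (s : ℝ) := (isSO_iff.1 (hSO s)).2.2
  have hB11 : B 1 1 = B 0 0 := (hentry 1 1).unique (by simpa only [h11] using hentry 0 0)
  have hB01 : B 0 1 = -B 1 0 := (hentry 0 1).unique (by simpa only [h01] using (hentry 1 0).fun_neg)
  have hradial : F t 0 0 * B 0 0 + F t 1 0 * B 1 0 = 0 := by
    have h := ((hentry 0 0).fun_pow 2).fun_add ((hentry 1 0).fun_pow 2)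
    simp only [hcs, Nat.add_one_sub_one, pow_one, Nat.cast_ofNat] at h
    linear_combination h.unique (hasDerivAt_const t (1 : ℝ)) / 2
  ext i j
  fin_cases i <;> fin_cases j <;>
    simp only [Fin.zero_eta, Fin.mk_one, Fin.isValue, Zm, mul_apply, Fin.sum_univ_two,
      Matrix.smul_apply, smul_eq_mul, of_apply, cons_val', cons_val_zero, cons_val_one,
      cons_val_fin_one, h11, h01, hB11, hB01]
  · linear_combination F t 0 0 * hradial - B 0 0 * hcs t
  · linear_combination -F t 1 0 * hradial + B 1 0 * hcs t
  · linear_combination F t 1 0 * hradial - B 1 0 * hcs t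
  · linear_combination F t 0 0 * hradial - B 0 0 * hcs t

lemma X1_eq_of_hasDerivAt_of_isSO (κ : ℝ) {F : ℝ → M2} {B : M2} {t : ℝ}
    (hF : HasDerivAt F B t) (hSO : ∀ s, isSO (F s)) :
    X1 κ (F t) B = κ + 1 / 4 * X3 (F t) B ^ 2 := by
  rw [eq_smul_Zm_mul_of_hasDerivAt hF hSO, X1_smul_Zm_mul κ (hSO t), X3_smul_Zm_mul (hSO t)]
  ring

/-- The equation `Ä + κ A = Λ(A, Ȧ) cof A` as a first-order system in `(A, Ȧ)`. -/
def phaseField (κ : ℝ) (p : M2 × M2) : M2 × M2 := (p.2, Lam κ p.1 p.2 • cofm p.1 - κ • p.1)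

lemma contDiffAt_phaseField (κ : ℝ) {p : M2 × M2} (hp : mip p.1 p.1 ≠ 0) :
    ContDiffAt ℝ 1 (phaseField κ) p := by
  have hcofm : ContDiff ℝ 1 (fun p : M2 × M2 => cofm p.1) :=
    contDiff_pi.2 fun i => contDiff_pi.2 fun j => by
      fin_cases i <;> fin_cases j <;>
        simp only [Fin.zero_eta, Fin.mk_one, Fin.isValue, cofm, of_apply, cons_val',
          cons_val_zero, cons_val_one, cons_val_fin_one] <;> fun_prop
  have hLam : ContDiffAt ℝ 1 (fun p : M2 × M2 => Lam κ p.1 p.2) p := by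
    simp only [Lam, mip_eq, det_fin_two] at hp ⊢
    exact ContDiffAt.div (by fun_prop) (by fun_prop) hp
  exact contDiffAt_snd.prodMk ((hLam.smul hcofm.contDiffAt).sub (contDiffAt_fst.const_smul κ))

lemma hasDerivAt_phaseField_of_ode {κ : ℝ} {A : ℝ → M2} (hA : ContDiff ℝ 2 A)
    (hode : ∀ t, deriv (deriv A) t + κ • A t = Lam κ (A t) (deriv A t) • cofm (A t)) (t : ℝ) :
    HasDerivAt (fun s => (A s, deriv A s)) (phaseField κ (A t, deriv A t)) t := by
  have hA' : Differentiable ℝ (deriv A) :=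
    (contDiff_succ_iff_deriv.1 hA).2.2.differentiable one_ne_zero
  refine (hA.differentiable two_ne_zero t).hasDerivAt.prodMk ?_
  rw [← eq_sub_of_add_eq (hode t)]
  exact (hA' t).hasDerivAt

lemma phaseField_smul_Zm_mul (κ ω : ℝ) {R : M2} (hR : isSO R) :
    phaseField κ (R, ω • (Zm * R)) = (ω • (Zm * R), ω • (Zm * (ω • (Zm * R)))) := by
  have hLam : Lam κ R (ω • (Zm * R)) = κ - ω ^ 2 := by
    rw [Lam, mip_self_of_isSO hR, det_smul, det_mul, det_Zm, hR.1]
    simp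
  rw [phaseField, hLam, cofm_of_isSO hR, mul_smul_comm, ← Matrix.mul_assoc, Zm_mul_Zm, neg_one_mul]
  congr 1
  module

lemma hasDerivAt_phaseField_rotation (κ ω : ℝ) {U : M2} (hU : isSO U) (t : ℝ) :
    HasDerivAt (fun s => (Um (ω * s) * U, ω • (Zm * (Um (ω * s) * U))))
      (phaseField κ (Um (ω * t) * U, ω • (Zm * (Um (ω * t) * U)))) t := by
  have hR := hasDerivAt_Um_mul ω U t
  rw [phaseField_smul_Zm_mul κ ω (isSO_mul (isSO_Um _) hU)]
  exact hR.prodMk ((hR.const_matrix_mul Zm).const_smul ω)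

theorem eq_Um_mul_of_X1_eq {κ : ℝ} {A : ℝ → M2} (hA : ContDiff ℝ 2 A)
    (hode : ∀ t, deriv (deriv A) t + κ • A t = Lam κ (A t) (deriv A t) • cofm (A t))
    (hSO : isSO (A 0)) (hX1 : X1 κ (A 0) (deriv A 0) = κ + 1 / 4 * X3 (A 0) (deriv A 0) ^ 2)
    (t : ℝ) : A t = Um (X3 (A 0) (deriv A 0) * t / 2) * A 0 := by
  set ω := X3 (A 0) (deriv A 0) / 2
  have hphase := ODE_solution_eq_of_contDiffAt (t₀ := 0)
    (fun s => contDiffAt_phaseField κ <| by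
      simp [mip_self_of_isSO (isSO_mul (isSO_Um (ω * s)) hSO)])
    (hasDerivAt_phaseField_of_ode hA hode) (hasDerivAt_phaseField_rotation κ ω hSO)
    (by simpa [Um] using eq_smul_Zm_mul_of_X1_eq hSO hX1)
  rw [show X3 (A 0) (deriv A 0) * t / 2 = ω * t by ring]
  exact congr_arg Prod.fst (congr_fun hphase t)

theorem rigid_rotation_iff_general (κ : ℝ) (A₀ B₀ : M2)
    (A : ℝ → M2) (hA : ContDiff ℝ 2 A)
    (hA0 : A 0 = A₀) (hB0 : deriv A 0 = B₀)
    (hode : ∀ t : ℝ, deriv (deriv A) t + κ • A t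
      = Lam κ (A t) (deriv A t) • cofm (A t)) :
    ((∀ t : ℝ, isSO (A t)) ↔
      (isSO A₀ ∧ X1 κ A₀ B₀ = κ + (1/4) * X3 A₀ B₀ ^ 2)) ∧
    ((∀ t : ℝ, isSO (A t)) → ∀ t : ℝ, A t = Um (X3 A₀ B₀ * t / 2) * A₀) := by
  subst hA0 hB0
  have hcond (hSO : ∀ t, isSO (A t)) :
      isSO (A 0) ∧ X1 κ (A 0) (deriv A 0) = κ + 1 / 4 * X3 (A 0) (deriv A 0) ^ 2 :=
    ⟨hSO 0, X1_eq_of_hasDerivAt_of_isSO κ (hA.differentiable two_ne_zero 0).hasDerivAt hSO⟩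
  have hrot (h : isSO (A 0) ∧ _) := eq_Um_mul_of_X1_eq hA hode h.1 h.2
  refine ⟨⟨hcond, fun h t => ?_⟩, fun hSO => hrot (hcond hSO)⟩
  rw [hrot h t]
  exact isSO_mul (isSO_Um _) h.1

/-- characterization of rigid rotations. -/
theorem rigid_rotation_iff (κ : ℝ) (hκ : 0 ≤ κ) (A₀ B₀ : M2)
    (hdet : A₀.det = 1) (htan : mip B₀ (cofm A₀) = 0)
    (A : ℝ → M2) (hA : ContDiff ℝ 2 A)
    (hA0 : A 0 = A₀) (hB0 : deriv A 0 = B₀)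
    (hode : ∀ t : ℝ, deriv (deriv A) t + κ • A t
      = Lam κ (A t) (deriv A t) • cofm (A t)) :
    ((∀ t : ℝ, isSO (A t)) ↔
      (isSO A₀ ∧ X1 κ A₀ B₀ = κ + (1/4) * X3 A₀ B₀ ^ 2)) ∧
    ((∀ t : ℝ, isSO (A t)) → ∀ t : ℝ, A t = Um (X3 A₀ B₀ * t / 2) * A₀) :=
  rigid_rotation_iff_general κ A₀ B₀ A hA hA0 hB0 hode
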